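/- arXiv:2204.06743 — 7 statements merged into one kernel-verified Lean document; each statement's English description precedes it below -/
import Mathlib

section
/- Let N ≥ 1, λ ∈ ℝ, and for each j ∈ ℤ/N let L_j < R_j be reals, κ_j : ℝ → ℝ be continuously differentiable with κ_j(x) ≥ 0 on [L_j, R_j], and v_j : ℝ → ℝ be twice continuously differentiable satisfying the eigenvalue equation (κ_j·v_j')'(x) = λ·v_j(x) for all x ∈ [L_j, R_j], together with the γ = 0 edge conditions v_j(R_j) = v_j(L_j) and κ_j(R_j)·v_j'(R_j) = κ_j(L_j)·v_j'(L_j). If ∑_j ∫_{L_j}^{R_j} v_j(x)² dx > 0 (the eigenfunction is not identically zero), then λ ≤ 0. -/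
/-! Multiply the eigenvalue equation `(κ v')' = λ v` by `v` and integrate by parts over each
element: the γ = 0 edge conditions make the boundary term `[κ v' v]_L^R` vanish, so
`λ ∫ v² = -∫ κ (v')² ≤ 0` on every element. Summing over the elements and dividing by the
positive total mass `∑ ∫ v²` gives `λ ≤ 0`. -/

open MeasureTheory intervalIntegral

theorem integral_deriv_mul_eq_neg_of_boundary {u v : ℝ → ℝ} {a b : ℝ}
    (hu : ContDiff ℝ 1 u) (hv : ContDiff ℝ 1 v) (hbd : u b * v b = u a * v a) :
    ∫ x in a..b, deriv u x * v x = -∫ x in a..b, u x * deriv v x := by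
  have hparts := integral_mul_deriv_eq_deriv_mul
    (fun x _ => (hu.differentiable one_ne_zero x).hasDerivAt)
    (fun x _ => (hv.differentiable one_ne_zero x).hasDerivAt)
    ((hu.continuous_deriv le_rfl).intervalIntegrable a b)
    ((hv.continuous_deriv le_rfl).intervalIntegrable a b)
  linarith

theorem eigenvalue_mul_integral_sq_nonpos {lam L R : ℝ} {κ v : ℝ → ℝ} (hLR : L ≤ R)
    (hκ : ContDiff ℝ 1 κ) (hκ0 : ∀ x ∈ Set.Icc L R, 0 ≤ κ x) (hv : ContDiff ℝ 2 v)
    (heig : ∀ x ∈ Set.Icc L R, deriv (fun y => κ y * deriv v y) x = lam * v x)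
    (hE : v R = v L) (hF : κ R * deriv v R = κ L * deriv v L) :
    lam * ∫ x in L..R, v x ^ 2 ≤ 0 := by
  have hv' : ContDiff ℝ 1 (deriv v) := ContDiff.deriv' (n := 1) hv
  have hparts := integral_deriv_mul_eq_neg_of_boundary (a := L) (b := R) (hκ.mul hv')
    (hv.of_le one_le_two) (by rw [hE, hF])
  have hlhs : ∫ x in L..R, deriv (fun y => κ y * deriv v y) x * v x
      = lam * ∫ x in L..R, v x ^ 2 := by
    rw [← intervalIntegral.integral_const_mul]
    refine intervalIntegral.integral_congr fun x hx => ?_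
    rw [Set.uIcc_of_le hLR] at hx
    simp only [heig x hx]
    ring
  have henergy : 0 ≤ ∫ x in L..R, κ x * deriv v x * deriv v x :=
    intervalIntegral.integral_nonneg hLR fun x hx => by
      rw [mul_assoc]
      exact mul_nonneg (hκ0 x hx) (mul_self_nonneg _)
  linarith

/-- Lemma 2.3 (first part): the operator `ℒ := (κ_j v')'` on the elements with
γ = 0 edge conditions has no positive eigenvalues. -/
theorem eigenvalues_nonpositive
    (N : ℕ) [NeZero N] (lam : ℝ)
    (L R : ZMod N → ℝ) (hLR : ∀ j, L j < R j)
    (κ v : ZMod N → ℝ → ℝ)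
    (hκ : ∀ j, ContDiff ℝ 1 (κ j))
    (hκ0 : ∀ j, ∀ x ∈ Set.Icc (L j) (R j), 0 ≤ κ j x)
    (hv : ∀ j, ContDiff ℝ 2 (v j))
    (heig : ∀ j, ∀ x ∈ Set.Icc (L j) (R j),
      deriv (fun y => κ j y * deriv (v j) y) x = lam * v j x)
    (hE : ∀ j, v j (R j) = v j (L j))
    (hF : ∀ j, κ j (R j) * deriv (v j) (R j) = κ j (L j) * deriv (v j) (L j))
    (hpos : 0 < ∑ j : ZMod N, ∫ x in (L j)..(R j), (v j x) ^ 2) :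
    lam ≤ 0 := by
  have hsum : lam * ∑ j : ZMod N, ∫ x in (L j)..(R j), (v j x) ^ 2 ≤ 0 := by
    rw [Finset.mul_sum]
    exact Finset.sum_nonpos fun j _ => eigenvalue_mul_integral_sq_nonpos (hLR j).le (hκ j)
      (hκ0 j) (hv j) (heig j) (hE j) (hF j)
  exact nonpos_of_mul_nonpos_left hsum hpos
end

section
/- Let N ≥ 1, λ ∈ ℝ, β > 0, and for each j ∈ ℤ/N let L_j < R_j be reals with element length H_j := R_j − L_j, κ_j : ℝ → ℝ be continuously differentiable with κ_j(x) ≥ β·H_j²/(4π²) on [L_j, R_j], and v_j : ℝ → ℝ be twice continuously differentiable satisfying the eigenvalue equation (κ_j·v_j')'(x) = λ·v_j(x) on [L_j, R_j], the γ = 0 edge conditions v_j(R_j) = v_j(L_j) and κ_j(R_j)·v_j'(R_j) = κ_j(L_j)·v_j'(L_j), and the orthogonality to piecewise constants ∫_{L_j}^{R_j} v_j(x) dx = 0 for every j. If ∑_j ∫_{L_j}^{R_j} v_j(x)² dx > 0, then λ ≤ −β. -/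
/-!
Multiplying the eigenvalue equation by `v_j` and integrating by parts, the edge conditions cancel
the boundary term, so `λ ∫ v_j² = -∫ κ_j v_j'² ≤ -(β H_j² / 4π²) ∫ v_j'²`. Wirtinger's inequality
`∫ v_j'² ≥ (4π² / H_j²) ∫ v_j²` finishes each element: for `f(R) = f(L)` integration by parts gives
`2π |n| |f̂(n)| = H |f'̂(n)|`, the zero mean kills `f̂(0)`, and Parseval sums the squares.
Adding up the elements gives `λ S ≤ -β S` with `S > 0`.
-/

open MeasureTheory intervalIntegral Real

open Complex in
theorem two_pi_mul_norm_fourierCoeffOn_le {a b : ℝ} (hab : a < b) {f f' : ℝ → ℂ}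
    (hf : ∀ x ∈ Set.uIcc a b, HasDerivAt f (f' x) x) (hf' : IntervalIntegrable f' volume a b)
    (hper : f b = f a) {n : ℤ} (hn : n ≠ 0) :
    2 * π * ‖fourierCoeffOn hab f n‖ ≤ (b - a) * ‖fourierCoeffOn hab f' n‖ := by
  have hcoeff : 2 * π * |(n : ℝ)| * ‖fourierCoeffOn hab f n‖ =
      (b - a) * ‖fourierCoeffOn hab f' n‖ := by
    rw [fourierCoeffOn_of_hasDerivAt hab hn hf hf', hper, sub_self, mul_zero, zero_sub]
    simp [← ofReal_sub, abs_of_pos pi_pos, abs_of_pos (sub_pos.2 hab)]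
    field_simp
  have hn1 : (1 : ℝ) ≤ |(n : ℝ)| := by exact_mod_cast Int.one_le_abs hn
  calc 2 * π * ‖fourierCoeffOn hab f n‖ = 2 * π * 1 * ‖fourierCoeffOn hab f n‖ := by ring
    _ ≤ 2 * π * |(n : ℝ)| * ‖fourierCoeffOn hab f n‖ := by gcongr
    _ = (b - a) * ‖fourierCoeffOn hab f' n‖ := hcoeff

theorem fourierCoeffOn_zero {a b : ℝ} (hab : a < b) (f : ℝ → ℂ) :
    fourierCoeffOn hab f 0 = (1 / (b - a) : ℝ) • ∫ x in a..b, f x := by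
  simp [fourierCoeffOn_eq_integral]

theorem Continuous.memLp_two_restrict_Ioc {f : ℝ → ℂ} (hf : Continuous f) (a b : ℝ) :
    MemLp f 2 (volume.restrict (Set.Ioc a b)) :=
  (memLp_two_iff_integrable_sq_norm hf.aestronglyMeasurable).2 (hf.norm.pow 2).integrableOn_Ioc

open Complex in
theorem mul_integral_sq_le_integral_deriv_sq {a b : ℝ} (hab : a < b) {f : ℝ → ℝ}
    (hf : ContDiff ℝ 1 f) (hper : f b = f a) (hmean : ∫ x in a..b, f x = 0) :
    4 * π ^ 2 / (b - a) ^ 2 * ∫ x in a..b, f x ^ 2 ≤ ∫ x in a..b, deriv f x ^ 2 := by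
  set F : ℝ → ℂ := fun x => (f x : ℂ)
  set F' : ℝ → ℂ := fun x => ((deriv f x : ℝ) : ℂ)
  have hF : Continuous F := continuous_ofReal.comp hf.continuous
  have hF' : Continuous F' := continuous_ofReal.comp (hf.continuous_deriv le_rfl)
  have hFF' : ∀ x ∈ Set.uIcc a b, HasDerivAt F (F' x) x := fun x _ =>
    ((hf.differentiable one_ne_zero x).hasDerivAt).ofReal_comp
  have hcoeff (n : ℤ) :
      (2 * π / (b - a)) ^ 2 * ‖fourierCoeffOn hab F n‖ ^ 2 ≤ ‖fourierCoeffOn hab F' n‖ ^ 2 := by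
    rcases eq_or_ne n 0 with rfl | hn
    · have h0 : fourierCoeffOn hab F 0 = 0 := by
        simp [fourierCoeffOn_zero, F, integral_ofReal, hmean]
      rw [h0, norm_zero, zero_pow two_ne_zero, mul_zero]
      positivity
    · have := two_pi_mul_norm_fourierCoeffOn_le hab hFF' (hF'.intervalIntegrable a b)
        (by simp [F, hper]) hn
      rw [div_pow, div_mul_eq_mul_div, div_le_iff₀ (pow_pos (sub_pos.2 hab) 2), ← mul_pow,
        ← mul_pow, mul_comm _ (b - a)]
      gcongr
  have hparseval := hasSum_le hcoeff
    ((hasSum_sq_fourierCoeffOn hab (hF.memLp_two_restrict_Ioc a b)).mul_left _)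
    (hasSum_sq_fourierCoeffOn hab (hF'.memLp_two_restrict_Ioc a b))
  simp only [F, F', norm_real, Real.norm_eq_abs, sq_abs, smul_eq_mul] at hparseval
  refine le_of_mul_le_mul_left ?_ (inv_pos.2 (sub_pos.2 hab))
  calc (b - a)⁻¹ * (4 * π ^ 2 / (b - a) ^ 2 * ∫ x in a..b, f x ^ 2)
      = (2 * π / (b - a)) ^ 2 * ((b - a)⁻¹ * ∫ x in a..b, f x ^ 2) := by
        field_simp
        ring
    _ ≤ _ := hparseval

theorem integral_deriv_flux_mul_eq_neg {a b : ℝ} {K w : ℝ → ℝ} (hK : ContDiff ℝ 1 K)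
    (hw : ContDiff ℝ 2 w) (hE : w b = w a) (hF : K b * deriv w b = K a * deriv w a) :
    ∫ x in a..b, deriv (fun y => K y * deriv w y) x * w x =
      -∫ x in a..b, K x * deriv w x ^ 2 := by
  have hw' : ContDiff ℝ 1 (deriv w) := hw.deriv'
  have hflux : ContDiff ℝ 1 fun y => K y * deriv w y := hK.mul hw'
  have hparts := integral_mul_deriv_eq_deriv_mul
    (fun x _ => ((hw.differentiable two_ne_zero x).hasDerivAt))
    (fun x _ => ((hflux.differentiable one_ne_zero x).hasDerivAt))
    (hw'.continuous.intervalIntegrable a b) ((hflux.continuous_deriv le_rfl).intervalIntegrable a b)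
  simp only [hE, hF, sub_self, zero_sub] at hparts
  calc ∫ x in a..b, deriv (fun y => K y * deriv w y) x * w x
      = ∫ x in a..b, w x * deriv (fun y => K y * deriv w y) x :=
        integral_congr fun x _ => mul_comm _ _
    _ = -∫ x in a..b, deriv w x * (K x * deriv w x) := hparts
    _ = -∫ x in a..b, K x * deriv w x ^ 2 := by
        congr 1
        exact integral_congr fun x _ => by ring

theorem eigenvalue_mul_integral_sq_le {a b lam β : ℝ} (hab : a < b) (hβ : 0 ≤ β)
    {K w : ℝ → ℝ} (hK : ContDiff ℝ 1 K)
    (hKβ : ∀ x ∈ Set.Icc a b, β * (b - a) ^ 2 / (4 * π ^ 2) ≤ K x)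
    (hw : ContDiff ℝ 2 w)
    (heig : ∀ x ∈ Set.Icc a b, deriv (fun y => K y * deriv w y) x = lam * w x)
    (hE : w b = w a) (hF : K b * deriv w b = K a * deriv w a)
    (hmean : ∫ x in a..b, w x = 0) :
    lam * ∫ x in a..b, w x ^ 2 ≤ -β * ∫ x in a..b, w x ^ 2 := by
  set c := β * (b - a) ^ 2 / (4 * π ^ 2) with hc_def
  have hc : 0 ≤ c := by positivity
  have hcβ : c * (4 * π ^ 2 / (b - a) ^ 2) = β := by
    have : b - a ≠ 0 := (sub_pos.2 hab).ne'
    rw [hc_def]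
    field_simp
  have hw' : Continuous (deriv w) := hw.continuous_deriv one_le_two
  have hKc : c * ∫ x in a..b, deriv w x ^ 2 ≤ ∫ x in a..b, K x * deriv w x ^ 2 := by
    rw [← intervalIntegral.integral_const_mul]
    exact integral_mono_on hab.le ((continuous_const.mul (hw'.pow 2)).intervalIntegrable a b)
      ((hK.continuous.mul (hw'.pow 2)).intervalIntegrable a b)
      fun x hx => mul_le_mul_of_nonneg_right (hKβ x hx) (sq_nonneg _)
  have hwirt := mul_integral_sq_le_integral_deriv_sq hab (hw.of_le one_le_two) hE hmean
  calc lam * ∫ x in a..b, w x ^ 2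
      = ∫ x in a..b, deriv (fun y => K y * deriv w y) x * w x := by
        rw [← intervalIntegral.integral_const_mul]
        refine integral_congr fun x hx => ?_
        rw [heig x (Set.uIcc_of_le hab.le ▸ hx)]
        ring
    _ = -∫ x in a..b, K x * deriv w x ^ 2 := integral_deriv_flux_mul_eq_neg hK hw hE hF
    _ ≤ -(c * (4 * π ^ 2 / (b - a) ^ 2 * ∫ x in a..b, w x ^ 2)) := by
        gcongr
        exact (mul_le_mul_of_nonneg_left hwirt hc).trans hKc
    _ = -β * ∫ x in a..b, w x ^ 2 := by rw [← mul_assoc, hcβ, neg_mul]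

/-- Lemma 2.3 (spectral gap): for the operator `ℒ := (κ_j v')'` on elements with
γ = 0 edge conditions and `κ_j ≥ β H_j²/(4π²)`, every eigenvalue whose
eigenfunction has zero mean on each element (and is not identically zero)
satisfies `λ ≤ −β`. -/
theorem eigenvalues_spectral_gap
    (N : ℕ) [NeZero N] (lam β : ℝ) (hβ : 0 < β)
    (L R : ZMod N → ℝ) (hLR : ∀ j, L j < R j)
    (κ v : ZMod N → ℝ → ℝ)
    (hκ : ∀ j, ContDiff ℝ 1 (κ j))
    (hκβ : ∀ j, ∀ x ∈ Set.Icc (L j) (R j),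
      β * (R j - L j) ^ 2 / (4 * Real.pi ^ 2) ≤ κ j x)
    (hv : ∀ j, ContDiff ℝ 2 (v j))
    (heig : ∀ j, ∀ x ∈ Set.Icc (L j) (R j),
      deriv (fun y => κ j y * deriv (v j) y) x = lam * v j x)
    (hE : ∀ j, v j (R j) = v j (L j))
    (hF : ∀ j, κ j (R j) * deriv (v j) (R j) = κ j (L j) * deriv (v j) (L j))
    (hmean : ∀ j, (∫ x in (L j)..(R j), v j x) = 0)
    (hpos : 0 < ∑ j : ZMod N, ∫ x in (L j)..(R j), (v j x) ^ 2) :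
    lam ≤ -β := by
  have hsum : lam * ∑ j : ZMod N, ∫ x in (L j)..(R j), v j x ^ 2 ≤
      -β * ∑ j : ZMod N, ∫ x in (L j)..(R j), v j x ^ 2 := by
    simp only [Finset.mul_sum]
    exact Finset.sum_le_sum fun j _ => eigenvalue_mul_integral_sq_le (hLR j) hβ.le (hκ j)
      (hκβ j) (hv j) (heig j) (hE j) (hF j) (hmean j)
  exact le_of_mul_le_mul_right hsum hpos
end

section
/- Let N ≥ 1 and γ, θ ∈ ℝ with ¬(N even ∧ γ = 1 ∧ θ = 0). For each j ∈ ℤ/N let L_j < R_j be reals, κ_j : ℝ → ℝ be continuously differentiable, and u_j, v_j : ℝ → ℝ be twice continuously differentiable, with fluxes f_j := −κ_j·u_j' and g_j := −κ_j·v_j'. Suppose the family (u_j) with flux (f_j) satisfies, for every j, the field edge condition (1−γ/2)(u_j(R_j) − u_j(L_j)) = (γ/2)(u_{j+1}(L_{j+1}) − u_{j−1}(R_{j−1})) + (γθ/2)(u_j(L_j) + u_j(R_j)) − (γθ/2)(u_{j+1}(L_{j+1}) + u_{j−1}(R_{j−1})) and the flux edge condition (1−γ/2)(f_j(R_j) −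 f_j(L_j)) = (γ/2)(f_{j+1}(L_{j+1}) − f_{j−1}(R_{j−1})) − (γθ/2)(f_j(L_j) + f_j(R_j)) + (γθ/2)(f_{j+1}(L_{j+1}) + f_{j−1}(R_{j−1})), and likewise the family (v_j) with flux (g_j) satisfies both edge conditions. Then ∑_{j ∈ ℤ/N} ∫_{L_j}^{R_j} [ v_j(x)·(κ_j·u_j')'(x) − u_j(x)·(κ_j·v_j')'(x) ] dx = 0. -/
/-!
Integration by parts on each element leaves the boundary terms
`(uR ⬝ gR - vR ⬝ fR) - (uL ⬝ gL - vL ⬝ fL)` in the traces at the element ends. With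
`α = γ(1-θ)/2`, `β = γ(1+θ)/2` and `T_t^s x = (1-t) x + t x(· + s)` on `ZMod N → ℝ`, the field
condition reads `T_β^{-1} wR = T_α^{1} wL` and the flux condition `T_α^{-1} fR = T_β^{1} fL`.
The operators `T` commute, `T_t^s` is the transpose of `T_t^{-s}`, and `T_t^s` is invertible
unless `N` is even and `t = 1/2`, which fails for `α` or for `β` outside the excluded case.
Cancelling that invertible operator gives `uR ⬝ gR = uL ⬝ gL`, and likewise `vR ⬝ fR = vL ⬝ fL`.
-/

open MeasureTheory intervalIntegral

/-- The field edge condition (2.3a) with parameters `(γ, θ)` for a family `w` of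
functions on the cyclically indexed elements `X_j = (L j, R j)`. -/
def FieldEC (N : ℕ) (γ θ : ℝ) (L R : ZMod N → ℝ) (w : ZMod N → ℝ → ℝ) : Prop :=
  ∀ j : ZMod N,
    (1 - γ / 2) * (w j (R j) - w j (L j)) =
      (γ / 2) * (w (j + 1) (L (j + 1)) - w (j - 1) (R (j - 1)))
      + (γ * θ / 2) * (w j (L j) + w j (R j))
      - (γ * θ / 2) * (w (j + 1) (L (j + 1)) + w (j - 1) (R (j - 1)))

/-- The flux edge condition (2.3b) with parameters `(γ, θ)` for a family `f` of
fluxes on the cyclically indexed elements `X_j = (L j, R j)`. -/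
def FluxEC (N : ℕ) (γ θ : ℝ) (L R : ZMod N → ℝ) (f : ZMod N → ℝ → ℝ) : Prop :=
  ∀ j : ZMod N,
    (1 - γ / 2) * (f j (R j) - f j (L j)) =
      (γ / 2) * (f (j + 1) (L (j + 1)) - f (j - 1) (R (j - 1)))
      - (γ * θ / 2) * (f j (L j) + f j (R j))
      + (γ * θ / 2) * (f (j + 1) (L (j + 1)) + f (j - 1) (R (j - 1)))

theorem pairing_eq_of_adjoint_of_bijective {V W X : Type*} (B : V → W → X)
    {P Q : V → V} {P' Q' : W → W}
    (hP : ∀ x y, B (P x) y = B x (P' y)) (hQ : ∀ x y, B (Q x) y = B x (Q' y))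
    (hcomm : Function.Commute P' Q') (hP' : Function.Bijective P')
    {a b : V} {e G : W} (hab : P b = Q a) (heG : Q' G = P' e) :
    B b G = B a e := by
  obtain ⟨H, rfl⟩ := hP'.surjective G
  have hQ'H : Q' H = e := hP'.injective (by rw [hcomm H, heG])
  rw [← hP, hab, hQ, hQ'H]

theorem pairing_eq_of_adjoint_of_bijective' {V W X : Type*} (B : V → W → X)
    {P Q : V → V} {P' Q' : W → W}
    (hP : ∀ x y, B (P x) y = B x (P' y)) (hQ : ∀ x y, B (Q x) y = B x (Q' y))
    (hcomm : Function.Commute Q P) (hQbij : Function.Bijective Q)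
    {a b : V} {e G : W} (hab : P b = Q a) (heG : Q' G = P' e) :
    B b G = B a e :=
  pairing_eq_of_adjoint_of_bijective (flip B) (fun x y => (hQ y x).symm)
    (fun x y => (hP y x).symm) hcomm hQbij heG hab

namespace ZMod

variable (N : ℕ)

def shiftBlend (t : ℝ) (s : ZMod N) : (ZMod N → ℝ) →ₗ[ℝ] (ZMod N → ℝ) where
  toFun x j := (1 - t) * x j + t * x (j + s)
  map_add' x y := by funext j; simp only [Pi.add_apply]; ring
  map_smul' c x := by funext j; simp only [Pi.smul_apply, smul_eq_mul, RingHom.id_apply]; ring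

variable {N}

theorem shiftBlend_apply (t : ℝ) (s : ZMod N) (x : ZMod N → ℝ) (j : ZMod N) :
    shiftBlend N t s x j = (1 - t) * x j + t * x (j + s) := rfl

theorem shiftBlend_commute (t t' : ℝ) (s s' : ZMod N) :
    Function.Commute (shiftBlend N t s) (shiftBlend N t' s') := by
  intro x
  funext j
  simp only [shiftBlend_apply, add_right_comm j s' s]
  ring

theorem shiftBlend_dotProduct [NeZero N] (t : ℝ) (s : ZMod N) (x y : ZMod N → ℝ) :
    shiftBlend N t s x ⬝ᵥ y = x ⬝ᵥ shiftBlend N t (-s) y := by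
  have hshift : ∑ j, x (j + s) * y j = ∑ j, x j * y (j + -s) :=
    Fintype.sum_equiv (Equiv.addRight s) _ _ fun j => by simp
  simp only [dotProduct, shiftBlend_apply, add_mul, mul_add, Finset.sum_add_distrib,
    mul_assoc, mul_left_comm (x _), ← Finset.mul_sum, hshift]

theorem shiftBlend_injective [NeZero N] {t : ℝ} (s : ZMod N) (ht : ¬ (Even N ∧ t = 1 / 2)) :
    Function.Injective (shiftBlend N t s) := by
  rw [injective_iff_map_eq_zero]
  intro d hd
  have hkernel : ∀ j, t * d (j + s) = (t - 1) * d j := fun j => by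
    have h := congrFun hd j
    rw [shiftBlend_apply, Pi.zero_apply] at h
    linear_combination h
  by_cases ht0 : t = 0
  · funext j
    simpa [ht0] using hkernel j
  -- along the orbit of `s`, `d` is multiplied by `r` at each step, and `N • s = 0`
  set r := (t - 1) / t
  have hstep : ∀ j, d (j + s) = r * d j := fun j => by
    rw [div_mul_eq_mul_div, eq_div_iff ht0]
    linear_combination hkernel j
  have hpow : ∀ (k : ℕ) j, d (j + k • s) = r ^ k * d j := by
    intro k
    induction k with
    | zero => simp
    | succ k ih =>
      intro j
      rw [succ_nsmul, ← add_assoc, hstep, ih, pow_succ, mul_assoc, mul_left_comm]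
  have hr : r ^ N ≠ 1 := by
    intro h
    rcases (pow_eq_one_iff_of_ne_zero (NeZero.ne N)).mp h with h1 | ⟨h1, hev⟩
    · rw [div_eq_one_iff_eq ht0] at h1
      linarith
    · rw [div_eq_iff ht0] at h1
      exact ht ⟨hev, by linarith⟩
  funext j
  by_contra hj
  refine hr ((mul_eq_right₀ hj).mp ?_)
  simpa [nsmul_eq_mul] using (hpow N j).symm

theorem shiftBlend_bijective [NeZero N] {t : ℝ} (s : ZMod N) (ht : ¬ (Even N ∧ t = 1 / 2)) :
    Function.Bijective (shiftBlend N t s) :=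
  let hinj := shiftBlend_injective s ht
  ⟨hinj, LinearMap.injective_iff_surjective.mp hinj⟩

end ZMod

open ZMod

section EdgeConditions

variable {N : ℕ} {γ θ : ℝ} {L R : ZMod N → ℝ}

theorem FieldEC.shiftBlend_eq {w : ZMod N → ℝ → ℝ} (h : FieldEC N γ θ L R w) :
    shiftBlend N (γ * (1 + θ) / 2) (-1) (fun j => w j (R j)) =
      shiftBlend N (γ * (1 - θ) / 2) 1 (fun j => w j (L j)) := by
  funext j
  simp only [shiftBlend_apply, ← sub_eq_add_neg]
  linear_combination h j

theorem FluxEC.shiftBlend_eq {f : ZMod N → ℝ → ℝ} (h : FluxEC N γ θ L R f) :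
    shiftBlend N (γ * (1 - θ) / 2) (-1) (fun j => f j (R j)) =
      shiftBlend N (γ * (1 + θ) / 2) 1 (fun j => f j (L j)) := by
  funext j
  simp only [shiftBlend_apply, ← sub_eq_add_neg]
  linear_combination h j

theorem dotProduct_eq_of_shiftBlend_eq [NeZero N] {α β : ℝ}
    (hαβ : ¬ (Even N ∧ α = 1 / 2) ∨ ¬ (Even N ∧ β = 1 / 2)) {a b e G : ZMod N → ℝ}
    (hab : shiftBlend N β (-1) b = shiftBlend N α 1 a)
    (heG : shiftBlend N α (-1) G = shiftBlend N β 1 e) :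
    b ⬝ᵥ G = a ⬝ᵥ e := by
  have hβ : ∀ x y, shiftBlend N β (-1) x ⬝ᵥ y = x ⬝ᵥ shiftBlend N β 1 y := fun x y => by
    rw [shiftBlend_dotProduct, neg_neg]
  have hα : ∀ x y, shiftBlend N α 1 x ⬝ᵥ y = x ⬝ᵥ shiftBlend N α (-1) y :=
    shiftBlend_dotProduct α 1
  rcases hαβ with hα' | hβ'
  · exact pairing_eq_of_adjoint_of_bijective' _ hβ hα (shiftBlend_commute _ _ _ _)
      (shiftBlend_bijective 1 hα') hab heG
  · exact pairing_eq_of_adjoint_of_bijective _ hβ hα (shiftBlend_commute _ _ _ _)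
      (shiftBlend_bijective 1 hβ') hab heG

end EdgeConditions

noncomputable def concomitant (κ u v : ℝ → ℝ) (x : ℝ) : ℝ :=
  v x * (κ x * deriv u x) - u x * (κ x * deriv v x)

theorem integral_eq_concomitant_sub {κ u v : ℝ → ℝ}
    (hκ : ContDiff ℝ 1 κ) (hu : ContDiff ℝ 2 u) (hv : ContDiff ℝ 2 v) (a b : ℝ) :
    ∫ x in a..b, (v x * deriv (fun y => κ y * deriv u y) x
        - u x * deriv (fun y => κ y * deriv v y) x) =
      concomitant κ u v b - concomitant κ u v a := by
  have hp : ContDiff ℝ 1 (fun y => κ y * deriv u y) := hκ.mul hu.deriv'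
  have hq : ContDiff ℝ 1 (fun y => κ y * deriv v y) := hκ.mul hv.deriv'
  refine integral_eq_sub_of_hasDerivAt (fun x _ => ?_)
    (((hv.continuous.mul (hp.continuous_deriv le_rfl)).sub
      (hu.continuous.mul (hq.continuous_deriv le_rfl))).intervalIntegrable _ _)
  have hd : ∀ {f : ℝ → ℝ} {n : WithTop ℕ∞}, ContDiff ℝ n f → n ≠ 0 →
      HasDerivAt f (deriv f x) x := fun hf hn => (hf.differentiable hn x).hasDerivAt
  -- the cross terms `v' κ u'` and `u' κ v'` cancel
  refine (((hd hv two_ne_zero).mul (hd hp one_ne_zero)).sub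
    ((hd hu two_ne_zero).mul (hd hq one_ne_zero))).congr_deriv ?_
  ring

theorem selfAdjoint_general_coupling_general
    (N : ℕ) [NeZero N] (γ θ : ℝ)
    (hexc : ¬ (Even N ∧ γ = 1 ∧ θ = 0))
    (L R : ZMod N → ℝ)
    (κ u v : ZMod N → ℝ → ℝ)
    (hκ : ∀ j, ContDiff ℝ 1 (κ j))
    (hu : ∀ j, ContDiff ℝ 2 (u j)) (hv : ∀ j, ContDiff ℝ 2 (v j))
    (huE : FieldEC N γ θ L R u)
    (huF : FluxEC N γ θ L R (fun j x => -(κ j x * deriv (u j) x)))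
    (hvE : FieldEC N γ θ L R v)
    (hvF : FluxEC N γ θ L R (fun j x => -(κ j x * deriv (v j) x))) :
    ∑ j : ZMod N, ∫ x in (L j)..(R j),
      (v j x * deriv (fun y => κ j y * deriv (u j) y) x
        - u j x * deriv (fun y => κ j y * deriv (v j) y) x) = 0 := by
  have hαβ : ¬ (Even N ∧ γ * (1 - θ) / 2 = 1 / 2) ∨ ¬ (Even N ∧ γ * (1 + θ) / 2 = 1 / 2) := by
    by_contra! ⟨⟨hN, hα⟩, -, hβ⟩
    exact hexc ⟨hN, by linear_combination hα + hβ, by linear_combination hβ - hα - θ * (hα + hβ)⟩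
  have hug := dotProduct_eq_of_shiftBlend_eq hαβ huE.shiftBlend_eq hvF.shiftBlend_eq
  have hvf := dotProduct_eq_of_shiftBlend_eq hαβ hvE.shiftBlend_eq huF.shiftBlend_eq
  simp only [dotProduct, mul_neg, Finset.sum_neg_distrib, neg_inj] at hug hvf
  simp only [integral_eq_concomitant_sub (hκ _) (hu _) (hv _), concomitant,
    Finset.sum_sub_distrib]
  linear_combination hvf - hug

/-- Lemma 2.6 (self-adjointness for general coupling): the operator
`ℒu := (κ_j u')'` subject to the inter-element edge conditions (2.3) is
symmetric in the inner product `⟨v,u⟩ := ∑_j ∫_{X_j} v_j u_j dx`, for all real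
`γ, θ` except possibly the isolated case of `N` even, `γ = 1`, `θ = 0`. -/
theorem selfAdjoint_general_coupling
    (N : ℕ) [NeZero N] (γ θ : ℝ)
    (hexc : ¬ (Even N ∧ γ = 1 ∧ θ = 0))
    (L R : ZMod N → ℝ) (hLR : ∀ j, L j < R j)
    (κ u v : ZMod N → ℝ → ℝ)
    (hκ : ∀ j, ContDiff ℝ 1 (κ j))
    (hu : ∀ j, ContDiff ℝ 2 (u j)) (hv : ∀ j, ContDiff ℝ 2 (v j))
    (huE : FieldEC N γ θ L R u)
    (huF : FluxEC N γ θ L R (fun j x => -(κ j x * deriv (u j) x)))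
    (hvE : FieldEC N γ θ L R v)
    (hvF : FluxEC N γ θ L R (fun j x => -(κ j x * deriv (v j) x))) :
    ∑ j : ZMod N, ∫ x in (L j)..(R j),
      (v j x * deriv (fun y => κ j y * deriv (u j) y) x
        - u j x * deriv (fun y => κ j y * deriv (v j) y) x) = 0 :=
  selfAdjoint_general_coupling_general N γ θ hexc L R κ u v hκ hu hv huE huF hvE hvF
end

section
/- Let N ≥ 1 and let C₊, C₋ be real N×N matrices satisfying the commutativity identity C₊ᵀ C₋ = C₋ C₊ᵀ, with at least one of C₊, C₋ invertible. Suppose vectors u^R, u^L, f^R, f^L and ũ^R, ũ^L, f̃^R, f̃^L in ℝ^N satisfy the coupling relations C₊ u^R = C₋ᵀ u^L, C₋ f^R = C₊ᵀ f^L, C₊ ũ^R = C₋ᵀ ũ^L, and C₋ f̃^R = C₊ᵀ f̃^L. Then −⟨ũ^R, f^R⟩ + ⟨u^R, f̃^R⟩ + ⟨ũ^L, f^L⟩ − ⟨u^L, f̃^L⟩ = 0, where ⟨·,·⟩ denotes the Euclidean dot product on ℝ^N. -/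
open Matrix

private lemma dp_shift {N : ℕ} (A : Matrix (Fin N) (Fin N) ℝ) (a y : Fin N → ℝ) :
    (A *ᵥ a) ⬝ᵥ y = a ⬝ᵥ (Aᵀ *ᵥ y) := by
  rw [Matrix.dotProduct_mulVec, Matrix.vecMul_transpose]

private lemma key_p {N : ℕ} (Cp Cm : Matrix (Fin N) (Fin N) ℝ)
    (hcomm : Cpᵀ * Cm = Cm * Cpᵀ) (hCp : IsUnit Cp)
    (x y a b : Fin N → ℝ)
    (hx : Cp.mulVec x = Cmᵀ.mulVec a)
    (hy : Cm.mulVec y = Cpᵀ.mulVec b) :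
    x ⬝ᵥ y = a ⬝ᵥ b := by
  have hdet : IsUnit Cp.det := (Matrix.isUnit_iff_isUnit_det _).mp hCp
  have hdetT : IsUnit Cpᵀ.det := by simpa using hdet
  have : Invertible Cpᵀ := Matrix.invertibleOfIsUnitDet _ hdetT
  have hc : Cpᵀ⁻¹ * Cm = Cm * Cpᵀ⁻¹ := by
    have h := (Commute.invOf_left (a := Cm) (b := Cpᵀ) hcomm).eq
    rwa [invOf_eq_nonsing_inv] at h
  have hx' : x = (Cp⁻¹ * Cmᵀ) *ᵥ a := by
    rw [← Matrix.mulVec_mulVec, ← hx, Matrix.mulVec_mulVec,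
      Matrix.nonsing_inv_mul _ hdet, Matrix.one_mulVec]
  have hb : Cpᵀ⁻¹ *ᵥ (Cm *ᵥ y) = b := by
    rw [hy, Matrix.mulVec_mulVec, Matrix.nonsing_inv_mul _ hdetT, Matrix.one_mulVec]
  calc x ⬝ᵥ y = ((Cp⁻¹ * Cmᵀ) *ᵥ a) ⬝ᵥ y := by rw [← hx']
    _ = a ⬝ᵥ ((Cp⁻¹ * Cmᵀ)ᵀ *ᵥ y) := dp_shift _ _ _
    _ = a ⬝ᵥ b := by
        rw [Matrix.transpose_mul, Matrix.transpose_nonsing_inv, Matrix.transpose_transpose,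
          ← Matrix.mulVec_mulVec, ← hb, Matrix.mulVec_mulVec, Matrix.mulVec_mulVec, hc]

private lemma key_m {N : ℕ} (Cp Cm : Matrix (Fin N) (Fin N) ℝ)
    (hcomm : Cpᵀ * Cm = Cm * Cpᵀ) (hCm : IsUnit Cm)
    (x y a b : Fin N → ℝ)
    (hx : Cp.mulVec x = Cmᵀ.mulVec a)
    (hy : Cm.mulVec y = Cpᵀ.mulVec b) :
    x ⬝ᵥ y = a ⬝ᵥ b := by
  have hdet : IsUnit Cm.det := (Matrix.isUnit_iff_isUnit_det _).mp hCm
  have hdetT : IsUnit Cmᵀ.det := by simpa using hdet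
  have : Invertible Cm := Matrix.invertibleOfIsUnitDet _ hdet
  have hc : Cm⁻¹ * Cpᵀ = Cpᵀ * Cm⁻¹ := by
    have h := (Commute.invOf_left (a := Cpᵀ) (b := Cm) hcomm.symm).eq
    rwa [invOf_eq_nonsing_inv] at h
  have ha : a = (Cmᵀ⁻¹ * Cp) *ᵥ x := by
    rw [← Matrix.mulVec_mulVec, hx, Matrix.mulVec_mulVec,
      Matrix.nonsing_inv_mul _ hdetT, Matrix.one_mulVec]
  have hy' : y = (Cm⁻¹ * Cpᵀ) *ᵥ b := by
    rw [← Matrix.mulVec_mulVec, ← hy, Matrix.mulVec_mulVec,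
      Matrix.nonsing_inv_mul _ hdet, Matrix.one_mulVec]
  calc x ⬝ᵥ y = x ⬝ᵥ ((Cm⁻¹ * Cpᵀ) *ᵥ b) := by rw [← hy']
    _ = x ⬝ᵥ ((Cpᵀ * Cm⁻¹) *ᵥ b) := by rw [hc]
    _ = ((Cpᵀ * Cm⁻¹)ᵀ *ᵥ x) ⬝ᵥ b := (dp_shift _ _ _).symm
    _ = a ⬝ᵥ b := by
        rw [ha, Matrix.transpose_mul, Matrix.transpose_nonsing_inv, Matrix.transpose_transpose]

/-- Algebraic core of Lemma 2.6: for coupling matrices `C₊, C₋` with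
`C₊ᵀ C₋ = C₋ C₊ᵀ` and at least one of them invertible, the boundary bilinear
form vanishes for any vectors satisfying the coupling relations. -/
theorem boundary_form_vanishes
    (N : ℕ) (hN : 1 ≤ N)
    (Cp Cm : Matrix (Fin N) (Fin N) ℝ)
    (hcomm : Cpᵀ * Cm = Cm * Cpᵀ)
    (hinv : IsUnit Cp ∨ IsUnit Cm)
    (uR uL fR fL tuR tuL tfR tfL : Fin N → ℝ)
    (h1 : Cp.mulVec uR = Cmᵀ.mulVec uL)
    (h2 : Cm.mulVec fR = Cpᵀ.mulVec fL)
    (h3 : Cp.mulVec tuR = Cmᵀ.mulVec tuL)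
    (h4 : Cm.mulVec tfR = Cpᵀ.mulVec tfL) :
    -(tuR ⬝ᵥ fR) + (uR ⬝ᵥ tfR) + (tuL ⬝ᵥ fL) - (uL ⬝ᵥ tfL) = 0 := by
  rcases hinv with hCp | hCm
  · rw [key_p Cp Cm hcomm hCp tuR fR tuL fL h3 h2,
      key_p Cp Cm hcomm hCp uR tfR uL tfL h1 h4]
    ring
  · rw [key_m Cp Cm hcomm hCm tuR fR tuL fL h3 h2,
      key_m Cp Cm hcomm hCm uR tfR uL tfL h1 h4]
    ring
end

section
/- Let N ≥ 1 and θ ∈ ℝ with ¬(θ = 0 ∧ N even). If x : ℤ/N → ℝ satisfies (1 − θ)·x_j + (1 + θ)·x_{j−1} = 0 for every j ∈ ℤ/N, then x_j = 0 for all j. Consequently, at full coupling γ = 1 (and excluding the case θ = 0 with N even), the edge conditions (2.3) are equivalent to continuity of the field and the flux between adjacent elements: u_j^R = u_{j+1}^L and f_j^R = f_{j+1}^L for all j. -/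
/-! Iterating `a x_j = -b x_{j-1}` once around the cycle gives `a^N x_j = (-b)^N x_j`, so
`x = 0` as soon as `a^N ≠ (-b)^N`. For `a = 1 - θ`, `b = 1 + θ` equality of these real powers
means `1 - θ = ±(1 + θ)`, with the sign `+` (i.e. `θ = 0`) allowed only for even `N`.
The edge conditions at `γ = 1` are this cyclic system for the jumps `u_j^R - u_{j+1}^L`
(with `θ`) and `f_j^R - f_{j+1}^L` (with `-θ`). -/

section CyclicRecurrence

variable {R : Type*} [CommRing R] {N : ℕ} {a b : R} {x : ZMod N → R}

lemma pow_mul_eq_neg_pow_mul_sub (hx : ∀ j, a * x j + b * x (j - 1) = 0) (k : ℕ) (j : ZMod N) :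
    a ^ k * x j = (-b) ^ k * x (j - k) := by
  induction k with
  | zero => simp
  | succ k ih =>
    have step := hx (j - k)
    push_cast
    rw [← sub_sub]
    linear_combination a * ih + (-b) ^ k * step

lemma eq_zero_of_mul_add_mul_sub_one_eq_zero [NoZeroDivisors R] (hab : a ^ N ≠ (-b) ^ N)
    (hx : ∀ j, a * x j + b * x (j - 1) = 0) (j : ZMod N) : x j = 0 := by
  have around := pow_mul_eq_neg_pow_mul_sub hx N j
  rw [ZMod.natCast_self, sub_zero] at around
  refine (mul_eq_zero.mp (?_ : (a ^ N - (-b) ^ N) * x j = 0)).resolve_left (sub_ne_zero.mpr hab)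
  linear_combination around

end CyclicRecurrence

lemma one_sub_pow_ne_neg_one_add_pow {N : ℕ} (hN : N ≠ 0) {θ : ℝ} (h : ¬ (θ = 0 ∧ Even N)) :
    (1 - θ) ^ N ≠ (-(1 + θ)) ^ N := by
  rw [ne_eq, pow_eq_pow_iff_of_ne_zero hN, neg_neg, not_or, not_and]
  exact ⟨by intro; linarith, fun hθ hN => h ⟨by linarith, hN⟩⟩

/-- At full coupling γ = 1 (excluding θ = 0 with N even): the cyclic system
`(1−θ)x_j + (1+θ)x_{j−1} = 0` forces `x = 0`; consequently the edge conditions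
(2.3) at γ = 1 are equivalent to continuity of field and flux between adjacent
elements. -/
theorem full_coupling_continuity
    (N : ℕ) [NeZero N] (θ : ℝ) (h : ¬ (θ = 0 ∧ Even N)) :
    (∀ x : ZMod N → ℝ,
      (∀ j : ZMod N, (1 - θ) * x j + (1 + θ) * x (j - 1) = 0) →
      ∀ j : ZMod N, x j = 0) ∧
    (∀ uR uL fR fL : ZMod N → ℝ,
      (∀ j : ZMod N, (1 - 1 / 2) * (uR j - uL j) =
        (1 / 2) * (uL (j + 1) - uR (j - 1))
        + (θ / 2) * (uL j + uR j)
        - (θ / 2) * (uL (j + 1) + uR (j - 1))) →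
      (∀ j : ZMod N, (1 - 1 / 2) * (fR j - fL j) =
        (1 / 2) * (fL (j + 1) - fR (j - 1))
        - (θ / 2) * (fL j + fR j)
        + (θ / 2) * (fL (j + 1) + fR (j - 1))) →
      ∀ j : ZMod N, uR j = uL (j + 1) ∧ fR j = fL (j + 1)) := by
  have cyclic : ∀ θ : ℝ, ¬ (θ = 0 ∧ Even N) → ∀ x : ZMod N → ℝ,
      (∀ j, (1 - θ) * x j + (1 + θ) * x (j - 1) = 0) → ∀ j, x j = 0 := fun θ h _ =>
    eq_zero_of_mul_add_mul_sub_one_eq_zero (one_sub_pow_ne_neg_one_add_pow (NeZero.ne N) h)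
  refine ⟨cyclic θ h, fun uR uL fR fL hu hf j => ⟨?_, ?_⟩⟩
  · have jump := cyclic θ h (fun j => uR j - uL (j + 1)) (fun i => by
      simp only [sub_add_cancel]
      linear_combination 2 * hu i) j
    exact sub_eq_zero.mp jump
  · have jump := cyclic (-θ) (by rwa [neg_eq_zero]) (fun j => fR j - fL (j + 1)) (fun i => by
      simp only [sub_add_cancel]
      linear_combination 2 * hf i) j
    exact sub_eq_zero.mp jump
end

section
/- Let θ, δ ∈ ℝ with θ² ≤ 1, and set μ := √(1 + δ²/4). Then: (i) 1 + δ²/2 − θμδ + (θ²−1)δ²/4 = (μ − θδ/2)²; (ii) μ − θδ/2 > 0; and (iii) arsinh( ((μ − θδ/2)·(δ/2)) / √(1 + δ²/2 − θμδ + (θ²−1)δ²/4) ) = arsinh(δ/2), where arsinh denotes the inverse hyperbolic sine. -/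
/-- Symbol-level identity for Theorem 3.4: at full coupling γ = 1 the wave
holistic discretisation symbol reduces to `arsinh(δ/2)`. Here
`μ = √(1 + δ²/4)` and `θ² ≤ 1`. -/
theorem wave_full_coupling_symbol
    (θ δ : ℝ) (hθ : θ ^ 2 ≤ 1) :
    (1 + δ ^ 2 / 2 - θ * Real.sqrt (1 + δ ^ 2 / 4) * δ + (θ ^ 2 - 1) * δ ^ 2 / 4
        = (Real.sqrt (1 + δ ^ 2 / 4) - θ * δ / 2) ^ 2) ∧
    (0 < Real.sqrt (1 + δ ^ 2 / 4) - θ * δ / 2) ∧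
    (Real.arsinh (((Real.sqrt (1 + δ ^ 2 / 4) - θ * δ / 2) * (δ / 2))
        / Real.sqrt (1 + δ ^ 2 / 2 - θ * Real.sqrt (1 + δ ^ 2 / 4) * δ
            + (θ ^ 2 - 1) * δ ^ 2 / 4))
      = Real.arsinh (δ / 2)) := by
  set μ := Real.sqrt (1 + δ ^ 2 / 4) with hμdef
  have h0 : (0:ℝ) ≤ 1 + δ ^ 2 / 4 := by positivity
  have hμsq : μ ^ 2 = 1 + δ ^ 2 / 4 := Real.sq_sqrt h0
  have hi : 1 + δ ^ 2 / 2 - θ * μ * δ + (θ ^ 2 - 1) * δ ^ 2 / 4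
      = (μ - θ * δ / 2) ^ 2 := by ring_nf; nlinarith [hμsq]
  have hpos : 0 < μ - θ * δ / 2 := by
    nlinarith [hμsq, Real.sqrt_nonneg (1 + δ ^ 2 / 4), sq_nonneg δ, sq_nonneg (θ*δ),
      sq_nonneg (μ + θ * δ / 2), sq_nonneg (μ - θ * δ / 2)]
  refine ⟨hi, hpos, ?_⟩
  rw [hi, Real.sqrt_sq hpos.le, mul_comm, mul_div_assoc, div_self hpos.ne', mul_one]
end

section
/- Let κ : ℝ → ℝ be continuously differentiable and let 𝔲 : ℝ × ℝ × ℝ → ℝ be twice continuously differentiable (jointly in (t,𝔵,z)) satisfying, for all (t,𝔵,z), the embedding PDE ∂_t 𝔲 = (∂_𝔵 + ∂_z)[ κ(z)·(∂_𝔵𝔲 + ∂_z𝔲) ], equivalently ∂_t𝔲 = ∂_z(κ(z)∂_z𝔲) + (2κ(z)∂_z + κ'(z))∂_𝔵𝔲 + κ(z)∂_𝔵²𝔲. Then for every phase φ ∈ ℝ, the field u_φ(t,x) := 𝔲(t, x, x + φ) satisfies the heterogeneous diffusion PDE ∂_t u_φ(t,x) = ∂_x[ κ(x + φ)·∂_x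 u_φ(t,x) ] for all (t,x). -/
/-!
Both PDEs are statements about the flux `κ(z)(∂_𝔵 + ∂_z)𝔲`. Along the diagonal `z = x + φ` the
chain rule turns `∂_x` of a restricted field into `(∂_𝔵 + ∂_z)` of the field itself; applied once
to `𝔲` (giving `∂_x u_φ`) and once to the flux (giving the right-hand side of the embedding PDE),
it identifies the two PDEs at every point of the diagonal.
-/

section Slices

variable {F : Type*} [NormedAddCommGroup F] [NormedSpace ℝ F] {G : ℝ × ℝ × ℝ → F}

theorem deriv_slice_snd {t y z : ℝ} (hG : DifferentiableAt ℝ G (t, y, z)) :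
    deriv (fun y' => G (t, y', z)) y = fderiv ℝ G (t, y, z) (0, 1, 0) := by
  have hγ : HasDerivAt (fun y' : ℝ => (t, y', z)) ((0, 1, 0) : ℝ × ℝ × ℝ) y :=
    (hasDerivAt_const y t).prodMk ((hasDerivAt_id y).prodMk (hasDerivAt_const y z))
  exact (hG.hasFDerivAt.comp_hasDerivAt y hγ).deriv

theorem deriv_slice_thd {t y z : ℝ} (hG : DifferentiableAt ℝ G (t, y, z)) :
    deriv (fun w => G (t, y, w)) z = fderiv ℝ G (t, y, z) (0, 0, 1) := by
  have hγ : HasDerivAt (fun w : ℝ => (t, y, w)) ((0, 0, 1) : ℝ × ℝ × ℝ) z :=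
    (hasDerivAt_const z t).prodMk ((hasDerivAt_const z y).prodMk (hasDerivAt_id z))
  exact (hG.hasFDerivAt.comp_hasDerivAt z hγ).deriv

theorem deriv_diagonal {t y φ : ℝ} (hG : DifferentiableAt ℝ G (t, y, y + φ)) :
    deriv (fun y' => G (t, y', y' + φ)) y =
      deriv (fun y' => G (t, y', y + φ)) y + deriv (fun w => G (t, y, w)) (y + φ) := by
  have hγ : HasDerivAt (fun y' : ℝ => (t, y', y' + φ)) ((0, 1, 0) + (0, 0, 1) : ℝ × ℝ × ℝ) y :=
    ((hasDerivAt_const y t).prodMk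
      ((hasDerivAt_id y).prodMk ((hasDerivAt_id y).add_const φ))).congr_deriv (by simp)
  rw [deriv_slice_snd hG, deriv_slice_thd hG, ← map_add]
  exact (hG.hasFDerivAt.comp_hasDerivAt y hγ).deriv

theorem ContDiff.deriv_slice_snd_add_deriv_slice_thd {n : WithTop ℕ∞}
    (hG : ContDiff ℝ (n + 1) G) :
    ContDiff ℝ n fun p : ℝ × ℝ × ℝ =>
      deriv (fun y => G (p.1, y, p.2.2)) p.2.1 + deriv (fun w => G (p.1, p.2.1, w)) p.2.2 := by
  have hdiff : Differentiable ℝ G := hG.differentiable (by simp)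
  have hfderiv : ContDiff ℝ n (fderiv ℝ G) := hG.fderiv_right le_rfl
  have hpartials : (fun p : ℝ × ℝ × ℝ =>
      deriv (fun y => G (p.1, y, p.2.2)) p.2.1 + deriv (fun w => G (p.1, p.2.1, w)) p.2.2) =
      fun p => fderiv ℝ G p (0, 1, 0) + fderiv ℝ G p (0, 0, 1) := by
    funext p
    rw [deriv_slice_snd (hdiff _), deriv_slice_thd (hdiff _)]
  rw [hpartials]
  exact (hfderiv.clm_apply contDiff_const).add (hfderiv.clm_apply contDiff_const)

end Slices

/-- The phase-shift embedding of Section 4: if `𝔲(t,𝔵,z)` satisfies the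
embedding PDE `∂_t 𝔲 = (∂_𝔵 + ∂_z)[κ(z)(𝔲_𝔵 + 𝔲_z)]` on the cylindrical
domain, then for every phase `φ` the diagonal field `u_φ(t,x) := 𝔲(t,x,x+φ)`
satisfies the heterogeneous diffusion PDE `∂_t u_φ = ∂_x[κ(x+φ) ∂_x u_φ]`. -/
theorem phase_shift_embedding
    (κ : ℝ → ℝ) (hκ : ContDiff ℝ 1 κ)
    (u : ℝ → ℝ → ℝ → ℝ)
    (hu : ContDiff ℝ 2 (fun p : ℝ × ℝ × ℝ => u p.1 p.2.1 p.2.2))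
    (hpde : ∀ t x z,
      deriv (fun s => u s x z) t =
        deriv (fun y => κ z *
          (deriv (fun y' => u t y' z) y + deriv (fun w => u t y w) z)) x
        + deriv (fun w => κ w *
          (deriv (fun y' => u t y' w) x + deriv (fun w' => u t x w') w)) z) :
    ∀ φ t x,
      deriv (fun s => u s x (x + φ)) t =
        deriv (fun y => κ (y + φ) * deriv (fun y' => u t y' (y' + φ)) y) x := by
  intro φ t x
  set U : ℝ × ℝ × ℝ → ℝ := fun p => u p.1 p.2.1 p.2.2
  have hU : ContDiff ℝ (1 + 1) U := hu
  let flux : ℝ × ℝ × ℝ → ℝ := fun p => κ p.2.2 *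
    (deriv (fun y => u p.1 y p.2.2) p.2.1 + deriv (fun w => u p.1 p.2.1 w) p.2.2)
  have hflux : Differentiable ℝ flux :=
    ((hκ.comp (contDiff_snd.comp contDiff_snd)).mul
      hU.deriv_slice_snd_add_deriv_slice_thd).differentiable one_ne_zero
  have hdiag (y : ℝ) : deriv (fun y' => u t y' (y' + φ)) y =
      deriv (fun y' => u t y' (y + φ)) y + deriv (fun w => u t y w) (y + φ) :=
    deriv_diagonal (G := U) (hU.differentiable (by simp) _)
  calc deriv (fun s => u s x (x + φ)) t
      = deriv (fun y => flux (t, y, x + φ)) x + deriv (fun w => flux (t, x, w)) (x + φ) :=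
        hpde t x (x + φ)
    _ = deriv (fun y => flux (t, y, y + φ)) x := (deriv_diagonal (hflux _)).symm
    _ = deriv (fun y => κ (y + φ) * deriv (fun y' => u t y' (y' + φ)) y) x := by
        simp only [flux, hdiag]
end
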